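/- Unextendibility of the BB84 assemblage against non-signaling adversaries: let d ≥ 1 and let ω00, ω10, ω01, ω11 be positive semidefinite d×d complex matrices, each of trace 1, such that |0⟩⟨0| ⊗ ω00 + |1⟩⟨1| ⊗ ω10 = |+⟩⟨+| ⊗ ω01 + |−⟩⟨−| ⊗ ω11 as matrices indexed by Fin 2 × Fin d. Then ω00 = ω10 = ω01 = ω11. -/
import Mathlib


open scoped BigOperators
open Matrix Kronecker
open scoped ComplexOrder

noncomputable section

/-- Outer product `|v⟩⟨w|`. -/
def outer {n : Type*} (v w : n → ℂ) : Matrix n n ℂ :=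
  Matrix.of fun i j => v i * (starRingEnd ℂ) (w j)

noncomputable def ket0 : Fin 2 → ℂ := ![1, 0]
noncomputable def ket1 : Fin 2 → ℂ := ![0, 1]
noncomputable def ketP : Fin 2 → ℂ := ![((Real.sqrt 2 : ℝ) : ℂ)⁻¹, ((Real.sqrt 2 : ℝ) : ℂ)⁻¹]
noncomputable def ketM : Fin 2 → ℂ := ![((Real.sqrt 2 : ℝ) : ℂ)⁻¹, -((Real.sqrt 2 : ℝ) : ℂ)⁻¹]

/-- Unextendibility of the BB84 assemblage against non-signaling adversaries. -/
theorem bb84_unextendible {d : ℕ} (hd : 1 ≤ d)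
    (ω00 ω10 ω01 ω11 : Matrix (Fin d) (Fin d) ℂ)
    (h00 : ω00.PosSemidef) (h10 : ω10.PosSemidef)
    (h01 : ω01.PosSemidef) (h11 : ω11.PosSemidef)
    (t00 : ω00.trace = 1) (t10 : ω10.trace = 1)
    (t01 : ω01.trace = 1) (t11 : ω11.trace = 1)
    (heq : outer ket0 ket0 ⊗ₖ ω00 + outer ket1 ket1 ⊗ₖ ω10
         = outer ketP ketP ⊗ₖ ω01 + outer ketM ketM ⊗ₖ ω11) :
    ω00 = ω10 ∧ ω10 = ω01 ∧ ω01 = ω11 := by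
  have hc : ((Real.sqrt 2 : ℝ) : ℂ)⁻¹ * ((Real.sqrt 2 : ℝ) : ℂ)⁻¹ = 2⁻¹ := by
    rw [← mul_inv]
    norm_cast
    rw [Real.mul_self_sqrt (by norm_num : (0:ℝ) ≤ 2)]
    push_cast
    ring
  have h := fun (i j : Fin 2) (a b : Fin d) => congrFun (congrFun heq (i, a)) (j, b)
  have h01 : ∀ a b, ω01 a b = ω11 a b := by
    intro a b
    have := h 0 1 a b
    simp [outer, ket0, ket1, ketP, ketM, Complex.conj_ofReal] at this
    rw [hc] at this
    linear_combination -2 * this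
  have h0 : ∀ a b, ω00 a b = 2⁻¹ * ω01 a b + 2⁻¹ * ω11 a b := by
    intro a b
    have := h 0 0 a b
    simp [outer, ket0, ket1, ketP, ketM, Complex.conj_ofReal] at this
    rw [hc] at this
    linear_combination this
  have h1 : ∀ a b, ω10 a b = 2⁻¹ * ω01 a b + 2⁻¹ * ω11 a b := by
    intro a b
    have := h 1 1 a b
    simp [outer, ket0, ket1, ketP, ketM, Complex.conj_ofReal] at this
    rw [hc] at this
    linear_combination this
  have e01 : ω01 = ω11 := by ext a b; exact h01 a b
  refine ⟨?_, ?_, e01⟩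
  · ext a b; rw [h0 a b, h1 a b]
  · ext a b; rw [h1 a b, h01 a b]; ring

end
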